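/- If H = SK_n with n ≥ 4 is a convex subgraph of a two-dimensional partial cube G ∈ F(Q_3) and H is not contained in a larger full subdivision of a complete graph inside G, then H is a gated subgraph of G: every vertex x of G has a (unique) gate x' in H such that d(x,y) = d(x,x') + d(x',y) for every vertex y of H. -/

import Mathlib

open Finset

/-- The hypercube graph on subsets of `Fin m`. -/
def cubeGraph (m : ℕ) : SimpleGraph (Finset (Fin m)) where
  Adj A B := (symmDiff A B).card = 1
  symm := ⟨fun A B h => by show (symmDiff B A : Finset (Fin m)).card = 1; rwa [symmDiff_comm]⟩
  loopless := ⟨fun A h => by change (symmDiff A A : Finset (Fin m)).card = 1 at h; simp only [symmDiff_self, bot_eq_empty, card_empty] at h; exact absurd h (by norm_num)⟩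

/-- `V` is (the vertex set of) a partial cube isometrically embedded in `Q_m`:
the distance in the induced subgraph equals the Hamming distance. -/
def IsPC {m : ℕ} (V : Set (Finset (Fin m))) : Prop :=
  ∀ u v : V, ((cubeGraph m).induce V).dist u v = (symmDiff u.1 v.1).card

def Shatters {m : ℕ} (V : Set (Finset (Fin m))) (Y : Finset (Fin m)) : Prop :=
  ∀ Z ⊆ Y, ∃ B ∈ V, B ∩ Y = Z

def VCdimLE {m : ℕ} (V : Set (Finset (Fin m))) (d : ℕ) : Prop :=
  ∀ Y : Finset (Fin m), Shatters V Y → Y.card ≤ d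

inductive PCStep {m : ℕ} : Set (Finset (Fin m)) → Set (Finset (Fin m)) → Prop
  | contract (i : Fin m) (V : Set (Finset (Fin m))) :
      PCStep V ((fun B => B.erase i) '' V)
  | restrictPos (i : Fin m) (V : Set (Finset (Fin m))) :
      PCStep V {B ∈ V | i ∈ B}
  | restrictNeg (i : Fin m) (V : Set (Finset (Fin m))) :
      PCStep V {B ∈ V | i ∉ B}

/-- Partial-cube minor relation: a sequence of contractions and restrictions. -/
def PCMinor {m : ℕ} : Set (Finset (Fin m)) → Set (Finset (Fin m)) → Prop :=
  Relation.ReflTransGen PCStep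

/-- `W` is (the vertex set of) a `k`-dimensional subcube of `Q_m`. -/
def IsCubeFam {m : ℕ} (k : ℕ) (W : Set (Finset (Fin m))) : Prop :=
  ∃ (Y X : Finset (Fin m)), Disjoint Y X ∧ X.card = k ∧
    W = {B | ∃ Z ⊆ X, B = Y ∪ Z}

/-- `G` has the cube `Q_k` as a pc-minor. -/
def HasQMinor {m : ℕ} (V : Set (Finset (Fin m))) (k : ℕ) : Prop :=
  ∃ W, PCMinor V W ∧ IsCubeFam k W

def hdist {m : ℕ} (A B : Finset (Fin m)) : ℕ := (symmDiff A B).card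

def IsConvexIn {m : ℕ} (V S : Set (Finset (Fin m))) : Prop :=
  S ⊆ V ∧ ∀ u ∈ S, ∀ v ∈ S, ∀ x ∈ V, hdist u x + hdist x v = hdist u v → x ∈ S

def convexHullIn {m : ℕ} (V S : Set (Finset (Fin m))) : Set (Finset (Fin m)) :=
  ⋂₀ {T | S ⊆ T ∧ IsConvexIn V T}

def IsGatedIn {m : ℕ} (V S : Set (Finset (Fin m))) : Prop :=
  S ⊆ V ∧ ∀ x ∈ V, ∃ g ∈ S, ∀ y ∈ S, hdist x g + hdist g y = hdist x y

/-- The standardly embedded full subdivision `SK_n` in `Q_n`: singletons and pairs. -/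
def SKset (n : ℕ) : Set (Finset (Fin n)) := {B | B.card = 1 ∨ B.card = 2}

/-- A standardly embedded copy of `SK_n` in `Q_m` along the injection `ι`. -/
def skCopy {m : ℕ} (n : ℕ) (ι : Fin n → Fin m) : Set (Finset (Fin m)) :=
  (fun B => B.image ι) '' SKset n

/-!
Write `I` for the coordinates of the subdivided `K_n`, whose branch vertices are the singletons
`{i}`, `i ∈ I`. The gate of `x` is `x ∩ I`: if `x` met `I` in three coordinates, these would be
shattered (a fourth coordinate of `I` supplies the trace `∅`), so `x ∩ I` has at most two
elements, and the distance identity holds coordinatewise once `x ∩ I` is nonempty.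

That every vertex meets `I` is the real content. Convexity excludes `∅`, and maximality excludes
singletons `{e}` with `e ∉ I`, which would extend `SK_n` to `SK_{n+1}`. Take a smallest vertex `x`
avoiding `I`. Geodesics towards a branch vertex `{d}` yield `l_d ≠ e_d` in `x` with
`(x - l_d) + d` and `{e_d, d}` in `V`. A geodesic from `{e_a, a}` to `(x - l_b) + b` either leaves
through a smaller vertex avoiding `I` or reaches a vertex containing `e_a, a, b`, which shatters
`{e_a, a, b}`; hence `e_a = l_b` whenever `a ≠ b`, and three coordinates `a, b, c` give
`e_a = l_c = e_b = l_a`, a contradiction.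
-/

open scoped symmDiff

variable {m : ℕ}

lemma hdist_triangle (A B C : Finset (Fin m)) : hdist A C ≤ hdist A B + hdist B C :=
  (card_le_card (symmDiff_triangle A B C)).trans (card_union_le _ _)

lemma hdist_add_hdist_eq_iff {A B C : Finset (Fin m)} :
    hdist A B + hdist B C = hdist A C ↔ A ∩ C ⊆ B ∧ B ⊆ A ∪ C := by
  have hcard : hdist A C + 2 * #(A ∆ B ∩ B ∆ C) = hdist A B + hdist B C := by
    have hAC : A ∆ C = (A ∆ B ∪ B ∆ C) \ (A ∆ B ∩ B ∆ C) := by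
      ext t; simp only [mem_symmDiff, mem_sdiff, mem_union, mem_inter]; tauto
    have := card_union_add_card_inter (A ∆ B) (B ∆ C)
    have := card_le_card (inter_subset_union : A ∆ B ∩ B ∆ C ⊆ _)
    unfold hdist; rw [hAC, card_sdiff_of_subset inter_subset_union]; omega
  have hdisj : A ∆ B ∩ B ∆ C = ∅ ↔ A ∩ C ⊆ B ∧ B ⊆ A ∪ C := by
    simp only [eq_empty_iff_forall_notMem, subset_iff, mem_inter, mem_union, mem_symmDiff]
    exact ⟨fun h => ⟨fun t => by have := h t; tauto, fun t => by have := h t; tauto⟩,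
      fun h t => by have := h.1 (x := t); have := h.2 (x := t); tauto⟩
  rw [← hdisj, ← card_eq_zero]
  omega

lemma eq_erase_or_eq_insert_of_symmDiff_eq_singleton {α : Type*} [DecidableEq α]
    {u w : Finset α} {t : α} (h : u ∆ w = {t}) :
    (t ∈ u ∧ w = u.erase t) ∨ (t ∉ u ∧ w = insert t u) := by
  rw [← symmDiff_symmDiff_cancel_left u w, h]
  by_cases ht : t ∈ u
  · exact .inl ⟨ht, by ext s; by_cases s = t <;> simp_all [mem_symmDiff]⟩
  · exact .inr ⟨ht, by ext s; by_cases s = t <;> simp_all [mem_symmDiff]⟩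

lemma insert_ne_singleton {α : Type*} [DecidableEq α] {a : α} {S : Finset α} (haS : a ∉ S)
    (hS : S.Nonempty) : insert a S ≠ {a} := by
  obtain ⟨s, hs⟩ := hS
  intro h
  obtain rfl : s = a := mem_singleton.1 (h ▸ mem_insert_of_mem hs)
  exact haS hs

namespace IsPC

variable {V : Set (Finset (Fin m))} {u v : Finset (Fin m)}

theorem exists_adj_between (hV : IsPC V) (hu : u ∈ V) (hv : v ∈ V) (hne : u ≠ v) :
    ∃ w ∈ V, hdist u w = 1 ∧ hdist u w + hdist w v = hdist u v := by
  have hdist_ne : ((cubeGraph m).induce V).dist ⟨u, hu⟩ ⟨v, hv⟩ ≠ 0 := by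
    rw [hV]; exact fun h => hne (by simpa [symmDiff_eq_bot] using h)
  obtain ⟨p, hp⟩ := SimpleGraph.exists_walk_of_dist_ne_zero hdist_ne
  cases p with
  | nil => exact absurd hp.symm hdist_ne
  | @cons _ w _ hadj q =>
    have hq : hdist w.1 v ≤ q.length := (hV w ⟨v, hv⟩).symm.trans_le (SimpleGraph.dist_le q)
    have hp' : q.length + 1 = hdist u v := by
      rw [← SimpleGraph.Walk.length_cons hadj q, hp, hV]; rfl
    have h1 : hdist u w.1 = 1 := hadj
    have := hdist_triangle u w.1 v
    refine ⟨w.1, w.2, h1, ?_⟩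
    unfold hdist at *
    omega

theorem exists_erase_or_insert (hV : IsPC V) (hu : u ∈ V) (hv : v ∈ V) (hne : u ≠ v) :
    (∃ t ∈ u, t ∉ v ∧ u.erase t ∈ V) ∨ (∃ t ∈ v, t ∉ u ∧ insert t u ∈ V) := by
  obtain ⟨w, hw, hdw, hbetween⟩ := hV.exists_adj_between hu hv hne
  obtain ⟨hinter, hunion⟩ := hdist_add_hdist_eq_iff.1 hbetween
  obtain ⟨t, ht⟩ := card_eq_one.1 hdw
  rcases eq_erase_or_eq_insert_of_symmDiff_eq_singleton ht with ⟨htu, rfl⟩ | ⟨htu, rfl⟩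
  · exact .inl ⟨t, htu, fun htv => notMem_erase t u (hinter (mem_inter.2 ⟨htu, htv⟩)), hw⟩
  · exact .inr ⟨t, (mem_union.1 (hunion (mem_insert_self t u))).resolve_left htu, htu, hw⟩

theorem pair_mem (hV : IsPC V) (hempty : ∅ ∉ V) {a e : Fin m} (ha : {a} ∈ V) (he : {e} ∈ V)
    (hne : e ≠ a) : {e, a} ∈ V := by
  rcases hV.exists_erase_or_insert ha he (by simpa using hne.symm) with
    ⟨t, hta, -, hw⟩ | ⟨t, hte, -, hw⟩
  · rw [mem_singleton.1 hta, erase_singleton] at hw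
    exact absurd hw hempty
  · rwa [mem_singleton.1 hte] at hw

theorem exists_insert_erase_mem (hV : IsPC V) {a : Fin m} {S : Finset (Fin m)} (haS : a ∉ S)
    (hS : S.Nonempty) (hSa : insert a S ∈ V) (ha : {a} ∈ V) :
    ∃ l ∈ S, insert a (S.erase l) ∈ V := by
  rcases hV.exists_erase_or_insert hSa ha (insert_ne_singleton haS hS) with
    ⟨t, hta, hta', hw⟩ | ⟨t, hta, hta', -⟩
  · have hta'' : t ≠ a := by simpa using hta'
    refine ⟨t, (mem_insert.1 hta).resolve_left hta'', ?_⟩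
    rwa [erase_insert_of_ne hta''.symm] at hw
  · exact absurd (mem_singleton.1 hta ▸ mem_insert_self a S) hta'

theorem exists_pair_mem (hV : IsPC V) {a : Fin m} {S : Finset (Fin m)} (haS : a ∉ S)
    (hS : S.Nonempty) (hSa : insert a S ∈ V) (ha : {a} ∈ V) : ∃ e ∈ S, {e, a} ∈ V := by
  rcases hV.exists_erase_or_insert ha hSa (insert_ne_singleton haS hS).symm with
    ⟨t, hta, htS, -⟩ | ⟨t, htS, hta, hw⟩
  · exact absurd (mem_singleton.1 hta ▸ mem_insert_self a S) htS
  · exact ⟨t, (mem_insert.1 htS).resolve_left (by simpa using hta), hw⟩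

end IsPC

def skOn (I : Finset (Fin m)) : Set (Finset (Fin m)) := {s | s ⊆ I ∧ (#s = 1 ∨ #s = 2)}

section skOn

variable {V : Set (Finset (Fin m))} {I : Finset (Fin m)}

lemma singleton_mem_skOn {a : Fin m} (ha : a ∈ I) : {a} ∈ skOn I :=
  ⟨singleton_subset_iff.2 ha, .inl (card_singleton a)⟩

lemma empty_notMem_skOn : ∅ ∉ skOn I := by
  simp [skOn]

lemma skCopy_eq_skOn {n : ℕ} {iota : Fin n → Fin m} (hiota : Function.Injective iota) :
    skCopy n iota = skOn (univ.image iota) := by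
  ext s
  constructor
  · rintro ⟨B, hB, rfl⟩
    exact ⟨image_subset_image (subset_univ B), by rwa [card_image_of_injective _ hiota]⟩
  · rintro ⟨hsI, hs⟩
    obtain ⟨B, -, rfl⟩ := subset_image_iff.1 hsI
    exact ⟨B, by rwa [card_image_of_injective _ hiota] at hs, rfl⟩

lemma image_cons_univ {n : ℕ} (e : Fin m) (iota : Fin n → Fin m) :
    univ.image (Fin.cons e iota : Fin (n + 1) → Fin m) = insert e (univ.image iota) := by
  ext
  simp [Fin.exists_fin_succ, eq_comm]

lemma skOn_ssubset_skOn_insert {e : Fin m} (he : e ∉ I) : skOn I ⊂ skOn (insert e I) := by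
  have hsub : skOn I ⊆ skOn (insert e I) := fun s hs => ⟨hs.1.trans (subset_insert e I), hs.2⟩
  exact (Set.ssubset_iff_of_subset hsub).2
    ⟨{e}, singleton_mem_skOn (mem_insert_self e I), fun h => he (singleton_subset_iff.1 h.1)⟩

lemma IsPC.skOn_insert_subset (hV : IsPC V) (hempty : ∅ ∉ V) (hSK : skOn I ⊆ V) {e : Fin m}
    (heI : e ∉ I) (he : {e} ∈ V) : skOn (insert e I) ⊆ V := by
  rintro s ⟨hsI, hs⟩
  by_cases hes : e ∈ s
  · have hsI' : s.erase e ⊆ I := fun t ht =>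
      (mem_insert.1 (hsI (mem_of_mem_erase ht))).resolve_left (ne_of_mem_erase ht)
    have hcard := card_erase_of_mem hes
    rw [← insert_erase hes]
    rcases hs with hs | hs
    · rwa [card_eq_zero.1 (by omega : #(s.erase e) = 0)]
    · obtain ⟨a, ha⟩ := card_eq_one.1 (by omega : #(s.erase e) = 1)
      have haI : a ∈ I := singleton_subset_iff.1 (ha ▸ hsI')
      rw [ha]
      exact hV.pair_mem hempty (hSK (singleton_mem_skOn haI)) he (fun h => heI (h ▸ haI))
  · exact hSK ⟨(subset_insert_iff_of_notMem hes).1 hsI, hs⟩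

lemma empty_notMem_of_isConvexIn {S : Set (Finset (Fin m))} (hS : IsConvexIn V S)
    (hS0 : ∅ ∉ S) {a b : Fin m} (ha : {a} ∈ S) (hb : {b} ∈ S) (hab : a ≠ b) : ∅ ∉ V :=
  fun h0 => hS0 (hS.2 _ ha _ hb ∅ h0 (hdist_add_hdist_eq_iff.2
    ⟨(singleton_inter_of_notMem (by simpa using hab)).le, empty_subset _⟩))

lemma exists_inter_eq_of_subset (hSK : skOn I ⊆ V) {t : Fin m} {Y Z : Finset (Fin m)}
    (ht : t ∈ I) (htY : t ∉ Y) (hZY : Z ⊆ Y) (hZI : Z ⊆ I) (hZ : #Z ≤ 2) :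
    ∃ B ∈ V, B ∩ Y = Z := by
  rcases Z.eq_empty_or_nonempty with rfl | hne
  · exact ⟨{t}, hSK (singleton_mem_skOn ht), singleton_inter_of_notMem htY⟩
  · exact ⟨Z, hSK ⟨hZI, by have := hne.card_pos; omega⟩, inter_eq_left.2 hZY⟩

lemma card_inter_le_two (hvc : VCdimLE V 2) (hSK : skOn I ⊆ V) (hI : 3 < #I)
    {x : Finset (Fin m)} (hx : x ∈ V) : #(x ∩ I) ≤ 2 := by
  by_contra! h
  obtain ⟨Y, hY, hY3⟩ := exists_subset_card_eq (show 3 ≤ #(x ∩ I) by omega)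
  have hYI : Y ⊆ I := hY.trans inter_subset_right
  obtain ⟨t, ht⟩ : (I \ Y).Nonempty := by
    rw [← card_pos, card_sdiff_of_subset hYI]; omega
  refine absurd (hvc Y fun Z hZ => ?_) (by omega)
  rcases eq_or_ssubset_of_subset hZ with rfl | hlt
  · exact ⟨x, hx, inter_eq_right.2 (hY.trans inter_subset_left)⟩
  · exact exists_inter_eq_of_subset hSK (mem_sdiff.1 ht).1 (mem_sdiff.1 ht).2 hZ (hZ.trans hYI)
      (by have := card_lt_card hlt; omega)

lemma shatters_triple (hSK : skOn I ⊆ V) {x : Finset (Fin m)} (hxV : x ∈ V)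
    (hxI : Disjoint x I) {a b c e : Fin m} (ha : a ∈ I) (hb : b ∈ I) (hc : c ∈ I)
    (hab : a ≠ b) (hac : a ≠ c) (hbc : b ≠ c) (he : e ∈ x) (hea : {e, a} ∈ V) (hbx : insert b x ∈ V)
    {u : Finset (Fin m)} (hu : u ∈ V) (heab : {e, a, b} ⊆ u) : Shatters V {e, a, b} := by
  have hax : a ∉ x := disjoint_right.1 hxI ha
  have hbx' : b ∉ x := disjoint_right.1 hxI hb
  have hcx : c ∉ x := disjoint_right.1 hxI hc
  have hea' : e ≠ a := by rintro rfl; exact hax he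
  have heb : e ≠ b := by rintro rfl; exact hbx' he
  intro Z hZ
  by_cases heZ : e ∈ Z
  · have key : ∀ B, (∀ y ∈ ({e, a, b} : Finset (Fin m)), y ∈ B ↔ y ∈ Z) →
        B ∩ {e, a, b} = Z :=
      fun B hB => by ext y; exact ⟨fun h => (hB y (mem_inter.1 h).2).1 (mem_inter.1 h).1,
        fun h => mem_inter.2 ⟨(hB y (hZ h)).2 h, hZ h⟩⟩
    by_cases haZ : a ∈ Z <;> by_cases hbZ : b ∈ Z
    · exact ⟨u, hu, key u (by simp_all [insert_subset_iff])⟩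
    · exact ⟨{e, a}, hea, key _ (by simp_all [Ne.symm])⟩
    · exact ⟨insert b x, hbx, key _ (by simp_all [Ne.symm])⟩
    · exact ⟨x, hxV, key _ (by simp_all)⟩
  · have hZab : Z ⊆ {a, b} := fun y hy => by
      have := hZ hy
      simp only [mem_insert, mem_singleton] at this ⊢
      rcases this with rfl | h
      · exact absurd hy heZ
      · exact h
    refine exists_inter_eq_of_subset hSK hc ?_ hZ (hZab.trans ?_)
      ((card_le_card hZab).trans card_le_two)
    · simp only [mem_insert, mem_singleton, not_or]
      exact ⟨by rintro rfl; exact hcx he, hac.symm, hbc.symm⟩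
    · simp [insert_subset_iff, ha, hb]

end skOn

def IsSmallestAvoiding (V : Set (Finset (Fin m))) (I x : Finset (Fin m)) : Prop :=
  x ∈ V ∧ Disjoint x I ∧ ∀ w ∈ V, Disjoint w I → #x ≤ #w

namespace IsSmallestAvoiding

variable {V : Set (Finset (Fin m))} {I x : Finset (Fin m)}

theorem insert_mem (hx : IsSmallestAvoiding V I x) (hV : IsPC V) {a : Fin m} (ha : a ∈ I)
    (haV : {a} ∈ V) : insert a x ∈ V := by
  have hax : a ∉ x := disjoint_right.1 hx.2.1 ha
  rcases hV.exists_erase_or_insert hx.1 haV (by rintro rfl; exact hax (mem_singleton_self a))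
    with ⟨t, htx, -, hw⟩ | ⟨t, hta, -, hw⟩
  · have := hx.2.2 _ hw (disjoint_of_subset_left (erase_subset t x) hx.2.1)
    have := card_erase_lt_of_mem htx
    omega
  · rwa [mem_singleton.1 hta] at hw

theorem exists_insert_erase_mem_and_pair_mem (hx : IsSmallestAvoiding V I x) (hV : IsPC V)
    (hSK : skOn I ⊆ V) (hx2 : 2 ≤ #x) {d : Fin m} (hd : d ∈ I) :
    ∃ l ∈ x, ∃ e ∈ x, e ≠ l ∧ insert d (x.erase l) ∈ V ∧ {e, d} ∈ V := by
  have hdx : d ∉ x := disjoint_right.1 hx.2.1 hd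
  have hdV : {d} ∈ V := hSK (singleton_mem_skOn hd)
  obtain ⟨l, hl, hlV⟩ :=
    hV.exists_insert_erase_mem hdx (card_pos.1 (by omega)) (hx.insert_mem hV hd hdV) hdV
  obtain ⟨e, he, heV⟩ := hV.exists_pair_mem (fun h => hdx (mem_of_mem_erase h))
    (card_pos.1 (by rw [card_erase_of_mem hl]; omega)) hlV hdV
  exact ⟨l, hl, e, mem_of_mem_erase he, ne_of_mem_erase he, hlV, heV⟩

theorem exists_insert_subset_mem (hx : IsSmallestAvoiding V I x) (hV : IsPC V)
    {a b : Fin m} {T u : Finset (Fin m)} (hTx : T ⊆ x) (hT : #T < #x) (hbT : insert b T ∈ V)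
    (hu : u ∈ V) (hbu : b ∉ u) (huT : u ⊆ insert a T) : ∃ w ∈ V, insert b u ⊆ w := by
  rcases hV.exists_erase_or_insert hu hbT (fun h => hbu (h ▸ mem_insert_self b T)) with
    ⟨t, htu, htbT, hw⟩ | ⟨t, htbT, htu, hw⟩
  · have hsub : u.erase t ⊆ T := fun s hs => by
      have hta : t = a := (mem_insert.1 (huT htu)).resolve_right fun h => htbT (mem_insert_of_mem h)
      exact (mem_insert.1 (huT (mem_of_mem_erase hs))).resolve_left (hta ▸ ne_of_mem_erase hs)
    have := hx.2.2 _ hw (disjoint_of_subset_left (hsub.trans hTx) hx.2.1)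
    have := card_le_card hsub
    omega
  · by_cases htb : t = b
    · exact ⟨_, hw, htb ▸ subset_rfl⟩
    · have htT := (mem_insert.1 htbT).resolve_left htb
      obtain ⟨w, hw', hsub⟩ := hx.exists_insert_subset_mem hV hTx hT hbT hw
        (by simpa [Ne.symm htb] using hbu) (insert_subset (mem_insert_of_mem htT) huT)
      exact ⟨w, hw', (insert_subset_insert b (subset_insert t u)).trans hsub⟩
termination_by #(T \ u)
decreasing_by
  rw [sdiff_insert]
  exact card_erase_lt_of_mem (mem_sdiff.2 ⟨htT, htu⟩)

theorem eq_of_pair_mem (hx : IsSmallestAvoiding V I x) (hV : IsPC V) (hvc : VCdimLE V 2)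
    (hSK : skOn I ⊆ V) {a b c e l : Fin m} (ha : a ∈ I) (hb : b ∈ I) (hc : c ∈ I)
    (hab : a ≠ b) (hac : a ≠ c) (hbc : b ≠ c) (he : e ∈ x) (hea : {e, a} ∈ V)
    (hl : l ∈ x) (hbl : insert b (x.erase l) ∈ V) : e = l := by
  by_contra hel
  have hax : a ∉ x := disjoint_right.1 hx.2.1 ha
  have hbx : b ∉ x := disjoint_right.1 hx.2.1 hb
  have hea' : e ≠ a := by rintro rfl; exact hax he
  have heb : e ≠ b := by rintro rfl; exact hbx he
  obtain ⟨u, hu, hbu⟩ := hx.exists_insert_subset_mem (a := a) hV (erase_subset l x)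
    (card_erase_lt_of_mem hl) hbl hea (by simp [heb.symm, hab.symm])
    (by simp [insert_subset_iff, hel, he])
  have hsh := shatters_triple hSK hx.1 hx.2.1 ha hb hc hab hac hbc he hea
    (hx.insert_mem hV hb (hSK (singleton_mem_skOn hb))) hu
    (by simp only [insert_subset_iff, singleton_subset_iff] at hbu ⊢; tauto)
  have := hvc _ hsh
  rw [card_eq_three.2 ⟨e, a, b, hea', heb, hab, rfl⟩] at this
  omega

end IsSmallestAvoiding

theorem IsPC.not_disjoint_of_skOn_subset {V : Set (Finset (Fin m))} {I : Finset (Fin m)}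
    (hV : IsPC V) (hvc : VCdimLE V 2) (hSK : skOn I ⊆ V) (hI : 2 < #I) (hempty : ∅ ∉ V)
    (hlone : ∀ e ∉ I, {e} ∉ V) {x : Finset (Fin m)} (hx : x ∈ V) : ¬ Disjoint x I := by
  intro hxI
  obtain ⟨y, ⟨hyV, hyI⟩, hmin⟩ :=
    Set.exists_min_image {w | w ∈ V ∧ Disjoint w I} card (Set.toFinite _) ⟨x, hx, hxI⟩
  have hy : IsSmallestAvoiding V I y := ⟨hyV, hyI, fun w hw hwI => hmin w ⟨hw, hwI⟩⟩
  have hy2 : 2 ≤ #y := by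
    by_contra! h
    obtain h0 | h1 : #y = 0 ∨ #y = 1 := by omega
    · exact hempty (card_eq_zero.1 h0 ▸ hyV)
    · obtain ⟨e, rfl⟩ := card_eq_one.1 h1
      exact hlone e (disjoint_singleton_left.1 hyI) hyV
  have hpath := fun d (hd : d ∈ I) => hy.exists_insert_erase_mem_and_pair_mem hV hSK hy2 hd
  obtain ⟨a, ha, b, hb, c, hc, hab, hac, hbc⟩ := two_lt_card.1 hI
  obtain ⟨la, hla, ea, hea, heal, hlaV, haV⟩ := hpath a ha
  obtain ⟨-, -, eb, heb, -, -, hbV⟩ := hpath b hb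
  obtain ⟨lc, hlc, -, -, -, hlcV, -⟩ := hpath c hc
  have hac' : ea = lc :=
    hy.eq_of_pair_mem hV hvc hSK ha hc hb hac hab hbc.symm hea haV hlc hlcV
  have hbc' : eb = lc :=
    hy.eq_of_pair_mem hV hvc hSK hb hc ha hbc hab.symm hac.symm heb hbV hlc hlcV
  have hba : eb = la :=
    hy.eq_of_pair_mem hV hvc hSK hb ha hc hab.symm hbc hac heb hbV hla hlaV
  exact heal (hac'.trans (hbc'.symm.trans hba))

/-- A convex `SK_n` (`n ≥ 4`) in a two-dimensional partial cube which is not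
contained in a larger full subdivision is gated. -/
theorem stmt11 (m n : ℕ) (hn : 4 ≤ n) (V : Set (Finset (Fin m)))
    (iota : Fin n → Fin m) (hiota : Function.Injective iota)
    (hV : IsPC V) (hvc : VCdimLE V 2)
    (hsub : skCopy n iota ⊆ V) (hconv : IsConvexIn V (skCopy n iota))
    (hmax : ∀ (n' : ℕ) (iota' : Fin n' → Fin m), Function.Injective iota' →
      skCopy n' iota' ⊆ V → ¬ (skCopy n iota ⊂ skCopy n' iota')) :
    IsGatedIn V (skCopy n iota) := by
  set I := univ.image iota
  have hskI : skCopy n iota = skOn I := skCopy_eq_skOn hiota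
  have hSK : skOn I ⊆ V := hskI ▸ hsub
  have hI : #I = n := by simp [I, card_image_of_injective _ hiota]
  have hempty : ∅ ∉ V := by
    obtain ⟨a, ha, b, hb, hab⟩ := one_lt_card.1 (show 1 < #I by omega)
    exact empty_notMem_of_isConvexIn (hskI ▸ hconv) empty_notMem_skOn
      (singleton_mem_skOn ha) (singleton_mem_skOn hb) hab
  have hlone : ∀ e ∉ I, {e} ∉ V := fun e he heV => by
    have hinj : Function.Injective (Fin.cons e iota : Fin (n + 1) → Fin m) :=
      Fin.cons_injective_iff.2 ⟨by simpa [I] using he, hiota⟩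
    have hcons : skCopy (n + 1) (Fin.cons e iota) = skOn (insert e I) := by
      rw [skCopy_eq_skOn hinj, image_cons_univ]
    refine hmax (n + 1) _ hinj ?_ ?_
    · exact hcons ▸ hV.skOn_insert_subset hempty hSK he heV
    · exact hskI ▸ hcons ▸ skOn_ssubset_skOn_insert he
  refine ⟨hsub, fun x hx => ⟨x ∩ I, ?_, fun y hy => ?_⟩⟩
  · have hne := not_disjoint_iff_nonempty_inter.1
      (hV.not_disjoint_of_skOn_subset hvc hSK (by omega) hempty hlone hx)
    have := card_inter_le_two hvc hSK (by omega) hx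
    exact hskI ▸ ⟨inter_subset_right, by have := hne.card_pos; omega⟩
  · rw [hskI] at hy
    exact hdist_add_hdist_eq_iff.2
      ⟨inter_subset_inter_left hy.1, inter_subset_left.trans subset_union_left⟩
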